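/- arXiv:0706.1940 — 4 statements merged into one kernel-verified Lean document; each statement's English description precedes it below -/
import Mathlib

section
/- For any 2×2 real non-singular matrix G, there exists an orthogonal matrix C with entries in {0, ±1} having exactly one nonzero entry in each row and column, such that all eigenvalues of the product CG have negative real parts. -/
open Matrix

/-- A signed permutation matrix: orthogonal, entries in {0, 1, -1},
exactly one nonzero entry in each row and each column. -/
def IsSignedPerm {n : ℕ} (C : Matrix (Fin n) (Fin n) ℝ) : Prop :=
  Cᵀ * C = 1 ∧ (∀ i j, C i j = 0 ∨ C i j = 1 ∨ C i j = -1) ∧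
    (∀ i, ∃! j, C i j ≠ 0) ∧ (∀ j, ∃! i, C i j ≠ 0)

/-!
A real 2×2 matrix with negative trace and positive determinant has both eigenvalues, the roots
of `μ² - tr μ + det`, in the open left half-plane. Since `det (C * G) = det C * det G`, and `C`,
`-C` have the same determinant but give opposite traces `tr (C * G)`, it suffices to find a
signed permutation `C` with `det C` of the sign of `det G` and `tr (C * G) ≠ 0`. The identity
`tr(G)² + tr(JG)² = tr(RG)² + tr(SG)² + 4 det G`, with `J` the rotation by a right angle and
`R`, `S` two reflections, provides one among `1, J` when `det G > 0` and among `R, S` when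
`det G < 0`.
-/

lemma mem_spectrum_map_ofReal_iff (A : Matrix (Fin 2) (Fin 2) ℝ) (μ : ℂ) :
    μ ∈ spectrum ℂ (A.map Complex.ofReal) ↔ μ ^ 2 - A.trace * μ + A.det = 0 := by
  rw [spectrum.mem_iff, isUnit_iff_isUnit_det, isUnit_iff_ne_zero, not_not, det_fin_two,
    trace_fin_two, det_fin_two]
  simp only [Matrix.sub_apply, algebraMap_matrix_apply, map_apply, Algebra.algebraMap_self,
    RingHom.id_apply, if_pos, zero_ne_one, one_ne_zero, if_false, zero_sub,
    Complex.ofReal_add, Complex.ofReal_sub, Complex.ofReal_mul]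
  ring_nf

lemma Complex.re_neg_of_sq_sub_mul_add_eq_zero {t d : ℝ} (ht : t < 0) (hd : 0 < d) {μ : ℂ}
    (hμ : μ ^ 2 - t * μ + d = 0) : μ.re < 0 := by
  have hre : μ.re ^ 2 - μ.im ^ 2 - t * μ.re + d = 0 := by
    simpa [sq] using congrArg Complex.re hμ
  have him : μ.im * (2 * μ.re - t) = 0 := by
    have := congrArg Complex.im hμ
    simp only [sq, add_im, sub_im, mul_im, ofReal_re, ofReal_im, zero_mul, add_zero,
      zero_im] at this
    linear_combination this
  rcases mul_eq_zero.mp him with hreal | hre_eq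
  · by_contra! hre_nonneg
    rw [hreal] at hre
    nlinarith
  · linarith

theorem re_neg_of_mem_spectrum_of_trace_neg_of_det_pos {A : Matrix (Fin 2) (Fin 2) ℝ}
    (ht : A.trace < 0) (hd : 0 < A.det) : ∀ μ ∈ spectrum ℂ (A.map Complex.ofReal), μ.re < 0 :=
  fun μ hμ =>
    Complex.re_neg_of_sq_sub_mul_add_eq_zero ht hd ((mem_spectrum_map_ofReal_iff A μ).mp hμ)

lemma IsSignedPerm.neg {n : ℕ} {C : Matrix (Fin n) (Fin n) ℝ} (hC : IsSignedPerm C) :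
    IsSignedPerm (-C) := by
  obtain ⟨horth, hentries, hrows, hcols⟩ := hC
  refine ⟨by simpa using horth, fun i j => ?_, by simpa using hrows, by simpa using hcols⟩
  rcases hentries i j with h | h | h <;> simp [h]

lemma isSignedPerm_diag {e f : ℝ} (he : e = 1 ∨ e = -1) (hf : f = 1 ∨ f = -1) :
    IsSignedPerm !![e, 0; 0, f] := by
  rcases he with rfl | rfl <;> rcases hf with rfl | rfl <;> refine ⟨?_, ?_, ?_, ?_⟩ <;>
    simp [ExistsUnique, Fin.forall_fin_two, Fin.exists_fin_two, ← Matrix.ext_iff, mul_apply]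

lemma isSignedPerm_antidiag {e f : ℝ} (he : e = 1 ∨ e = -1) (hf : f = 1 ∨ f = -1) :
    IsSignedPerm !![0, e; f, 0] := by
  rcases he with rfl | rfl <;> rcases hf with rfl | rfl <;> refine ⟨?_, ?_, ?_, ?_⟩ <;>
    simp [ExistsUnique, Fin.forall_fin_two, Fin.exists_fin_two, ← Matrix.ext_iff, mul_apply]

lemma trace_sq_add_trace_rotation_mul_sq (G : Matrix (Fin 2) (Fin 2) ℝ) :
    G.trace ^ 2 + (!![0, -1; 1, 0] * G).trace ^ 2 =
      (!![1, 0; 0, -1] * G).trace ^ 2 + (!![0, 1; 1, 0] * G).trace ^ 2 + 4 * G.det := by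
  rw [eta_fin_two G]
  simp only [mul_fin_two, trace_fin_two_of, det_fin_two_of]
  ring

lemma exists_isSignedPerm_det_mul_pos_trace_mul_ne_zero (G : Matrix (Fin 2) (Fin 2) ℝ)
    (hG : G.det ≠ 0) : ∃ C, IsSignedPerm C ∧ 0 < (C * G).det ∧ (C * G).trace ≠ 0 := by
  have hsq := trace_sq_add_trace_rotation_mul_sq G
  rcases hG.lt_or_gt with hneg | hpos
  · have : (!![1, 0; 0, -1] * G).trace ≠ 0 ∨ (!![0, 1; 1, 0] * G).trace ≠ 0 := by
      by_contra! h
      nlinarith [h.1, h.2]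
    rcases this with h | h
    · refine ⟨_, isSignedPerm_diag (.inl rfl) (.inr rfl), ?_, h⟩
      rw [det_mul, det_fin_two_of]
      linarith
    · refine ⟨_, isSignedPerm_antidiag (.inl rfl) (.inl rfl), ?_, h⟩
      rw [det_mul, det_fin_two_of]
      linarith
  · have : G.trace ≠ 0 ∨ (!![0, -1; 1, 0] * G).trace ≠ 0 := by
      by_contra! h
      nlinarith [h.1, h.2]
    rcases this with h | h
    · refine ⟨1, ?_, by simpa, by simpa⟩
      rw [one_fin_two]
      exact isSignedPerm_diag (.inl rfl) (.inl rfl)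
    · refine ⟨_, isSignedPerm_antidiag (.inr rfl) (.inl rfl), ?_, h⟩
      rw [det_mul, det_fin_two_of]
      linarith

theorem stmt0 (G : Matrix (Fin 2) (Fin 2) ℝ) (hG : G.det ≠ 0) :
    ∃ C : Matrix (Fin 2) (Fin 2) ℝ, IsSignedPerm C ∧
      ∀ μ ∈ spectrum ℂ ((C * G).map (Complex.ofReal)), μ.re < 0 := by
  obtain ⟨C, hC, hdet, htr⟩ := exists_isSignedPerm_det_mul_pos_trace_mul_ne_zero G hG
  rcases htr.lt_or_gt with hneg | hpos
  · exact ⟨C, hC, re_neg_of_mem_spectrum_of_trace_neg_of_det_pos hneg hdet⟩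
  · refine ⟨-C, hC.neg, re_neg_of_mem_spectrum_of_trace_neg_of_det_pos ?_ ?_⟩
    · rwa [neg_mul, trace_neg, neg_neg_iff_pos]
    · simpa [neg_mul, det_neg] using hdet
end

section
/- Let G be a 2×2 real matrix with det G > 0, and let C_{1,α} be the rotation matrix with rows (cos α, sin α) and (−sin α, cos α). Define θ ∈ (−π, π] by tan θ = (G₁₂ − G₂₁)/(−G₁₁ − G₂₂) (with the signs of numerator and denominator determining the quadrant). If |α − θ| < π/2, then both eigenvalues of C_{1,α}G have negative real parts. -/
/-!
Writing `M = C_{1,α} G`, the eigenvalues of `M` are the roots of `μ² - (tr M) μ + det M`, and a real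
quadratic whose roots have negative sum `tr M` and positive product `det M` has both roots in the open
left half plane. Here `det M = det G > 0`, and with `z = (-G₁₁ - G₂₂) + (G₁₂ - G₂₁) i` one computes
`tr M = -(Re z cos α + Im z sin α) = -‖z‖ cos (α - arg z)`, which is negative since `θ = arg z`,
`|α - θ| < π/2` and `z ≠ 0` (otherwise `det G = -G₁₁² - G₁₂² ≤ 0`).
-/

open Matrix Real

theorem Complex.re_lt_zero_of_sq_sub_mul_add_eq_zero {t p : ℝ} (ht : t < 0) (hp : 0 < p) {μ : ℂ}
    (hμ : μ ^ 2 - t * μ + p = 0) : μ.re < 0 := by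
  have hre : μ.re ^ 2 - μ.im ^ 2 - t * μ.re + p = 0 := by
    simpa [sq] using congrArg Complex.re hμ
  have him : μ.im * (2 * μ.re - t) = 0 := by
    have := congrArg Complex.im hμ
    simp only [sq, Complex.sub_im, Complex.add_im, Complex.mul_im, Complex.ofReal_re,
      Complex.ofReal_im, Complex.zero_im] at this
    linarith
  rcases mul_eq_zero.mp him with hreal | hcentre
  · nlinarith
  · linarith

theorem Matrix.re_lt_zero_of_mem_spectrum_map_ofReal {M : Matrix (Fin 2) (Fin 2) ℝ}
    (htr : M.trace < 0) (hdet : 0 < M.det) :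
    ∀ μ ∈ spectrum ℂ (M.map Complex.ofReal), μ.re < 0 := by
  intro μ hμ
  rw [mem_spectrum_iff_isRoot_charpoly, charpoly_fin_two] at hμ
  have htrace : (M.map Complex.ofReal).trace = (M.trace : ℂ) :=
    (AddMonoidHom.map_trace Complex.ofRealHom M).symm
  have hdet' : (M.map Complex.ofReal).det = (M.det : ℂ) :=
    (RingHom.map_det Complex.ofRealHom M).symm
  refine Complex.re_lt_zero_of_sq_sub_mul_add_eq_zero htr hdet ?_
  simpa [htrace, hdet'] using hμ

theorem Complex.re_mul_cos_add_im_mul_sin (z : ℂ) (α : ℝ) :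
    z.re * Real.cos α + z.im * Real.sin α = ‖z‖ * Real.cos (α - z.arg) := by
  rw [Real.cos_sub, ← norm_mul_cos_arg z, ← norm_mul_sin_arg z]
  ring

theorem Matrix.trace_rotation_mul (G : Matrix (Fin 2) (Fin 2) ℝ) (α : ℝ) :
    (!![cos α, sin α; -sin α, cos α] * G).trace
      = -((-G 0 0 - G 1 1) * cos α + (G 0 1 - G 1 0) * sin α) := by
  simp only [trace_fin_two, mul_apply, Fin.sum_univ_two, of_apply, cons_val', cons_val_zero,
    cons_val_one, empty_val', cons_val_fin_one]
  ring

theorem Matrix.det_rotation_mul (G : Matrix (Fin 2) (Fin 2) ℝ) (α : ℝ) :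
    (!![cos α, sin α; -sin α, cos α] * G).det = G.det := by
  rw [det_mul, det_fin_two_of, mul_neg, sub_neg_eq_add, ← sq, ← sq, cos_sq_add_sin_sq, one_mul]

theorem Matrix.mk_neg_trace_skew_ne_zero_of_det_pos {G : Matrix (Fin 2) (Fin 2) ℝ}
    (hdet : 0 < G.det) : (⟨-G 0 0 - G 1 1, G 0 1 - G 1 0⟩ : ℂ) ≠ 0 := by
  intro hz
  obtain ⟨hre, him⟩ := Complex.ext_iff.mp hz
  have htr : G 1 1 = -G 0 0 := by linarith [show -G 0 0 - G 1 1 = 0 from hre]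
  have hanti : G 1 0 = G 0 1 := by linarith [show G 0 1 - G 1 0 = 0 from him]
  rw [det_fin_two, htr, hanti] at hdet
  nlinarith [sq_nonneg (G 0 0), sq_nonneg (G 0 1)]

theorem stmt3 (G : Matrix (Fin 2) (Fin 2) ℝ) (hdet : 0 < G.det) (α θ : ℝ)
    (hθ : θ = Complex.arg ⟨-G 0 0 - G 1 1, G 0 1 - G 1 0⟩)
    (hα : |α - θ| < π / 2) :
    ∀ μ ∈ spectrum ℂ
      ((!![Real.cos α, Real.sin α; -Real.sin α, Real.cos α] * G).map Complex.ofReal),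
      μ.re < 0 := by
  set z : ℂ := ⟨-G 0 0 - G 1 1, G 0 1 - G 1 0⟩
  have hz : 0 < ‖z‖ := norm_pos_iff.mpr (mk_neg_trace_skew_ne_zero_of_det_pos hdet)
  have hcos : 0 < cos (α - θ) := cos_pos_of_mem_Ioo (abs_lt.mp hα)
  refine re_lt_zero_of_mem_spectrum_map_ofReal ?_ (by rwa [det_rotation_mul])
  have htrace : (!![cos α, sin α; -sin α, cos α] * G).trace = -(‖z‖ * cos (α - θ)) := by
    rw [hθ, ← Complex.re_mul_cos_add_im_mul_sin]
    exact trace_rotation_mul G α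
  rw [htrace, neg_lt_zero]
  exact mul_pos hz hcos
end

section
/- Let G be a 2×2 real non-singular matrix with polar decomposition G = QB, where Q is orthogonal and B is symmetric positive definite. Let C be the unique matrix of the form C_{s,θ} (rows (s cos θ, sin θ), (−s sin θ, cos θ)) with s = sign(det G) and θ defined by tan θ = (sG₁₂ − G₂₁)/(−sG₁₁ − G₂₂) in (−π, π]. Then C = −Qᵀ, and consequently CG = −B is symmetric negative definite. -/
/-!
Write `d = det Q = ±1`. A `2 × 2` orthogonal matrix has the form `[[a, -d b], [b, d a]]` with
`a² + b² = 1`, and `det G = d · det B` with `det B > 0`, so `s = d`. Expanding `G = QB` with `B`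
symmetric, the off-diagonal entries of `B` cancel and
`(-s G₁₁ - G₂₂, s G₁₂ - G₂₁) = tr B · (-d a, -b)`, a positive multiple of a unit vector.
Hence `cos θ = -d a` and `sin θ = -b`, which is exactly `C = -Qᵀ`; then `CG = -QᵀQB = -B`.
-/

open Matrix Real

namespace Matrix

variable {R : Type*} [CommRing R]

lemma det_mul_self_eq_one_of_transpose_mul_self_eq_one {n : Type*} [Fintype n] [DecidableEq n]
    {Q : Matrix n n R} (hQ : Qᵀ * Q = 1) : Q.det * Q.det = 1 := by
  simpa only [det_mul, det_transpose, det_one] using congrArg det hQ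

lemma sq_add_sq_of_transpose_mul_self_eq_one_fin_two {Q : Matrix (Fin 2) (Fin 2) R}
    (hQ : Qᵀ * Q = 1) : Q 0 0 ^ 2 + Q 1 0 ^ 2 = 1 := by
  have h := congrFun (congrFun hQ 0) 0
  simp only [mul_apply, Fin.sum_univ_two, transpose_apply, one_apply_eq] at h
  linear_combination h

lemma apply_one_one_of_transpose_mul_self_eq_one_fin_two {Q : Matrix (Fin 2) (Fin 2) R}
    (hQ : Qᵀ * Q = 1) : Q 1 1 = Q.det * Q 0 0 := by
  have h00 := sq_add_sq_of_transpose_mul_self_eq_one_fin_two hQ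
  have h01 := congrFun (congrFun hQ 0) 1
  simp only [mul_apply, Fin.sum_univ_two, transpose_apply, one_apply_ne zero_ne_one] at h01
  rw [det_fin_two]
  linear_combination (-Q 1 1) * h00 + Q 1 0 * h01

lemma apply_zero_one_of_transpose_mul_self_eq_one_fin_two {Q : Matrix (Fin 2) (Fin 2) R}
    (hQ : Qᵀ * Q = 1) : Q 0 1 = -(Q.det * Q 1 0) := by
  have h00 := sq_add_sq_of_transpose_mul_self_eq_one_fin_two hQ
  have h01 := congrFun (congrFun hQ 0) 1
  simp only [mul_apply, Fin.sum_univ_two, transpose_apply, one_apply_ne zero_ne_one] at h01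
  rw [det_fin_two]
  linear_combination (-Q 0 1) * h00 + Q 0 0 * h01

end Matrix

lemma Matrix.PosDef.sign_det_mul {n : Type*} [Fintype n] [DecidableEq n]
    {Q B : Matrix n n ℝ} (hQ : Qᵀ * Q = 1) (hB : B.PosDef) :
    (if 0 < (Q * B).det then 1 else -1) = Q.det := by
  rw [det_mul]
  rcases mul_self_eq_one_iff.mp (det_mul_self_eq_one_of_transpose_mul_self_eq_one hQ) with h | h
  · rw [h, if_pos (by linarith [hB.det_pos])]
  · rw [h, if_neg (by nlinarith [hB.det_pos])]

lemma Complex.cos_sin_arg_mk_pos_mul {r a b : ℝ} (hr : 0 < r) (hab : a ^ 2 + b ^ 2 = 1) :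
    Real.cos (arg ⟨r * a, r * b⟩) = a ∧ Real.sin (arg ⟨r * a, r * b⟩) = b := by
  have hmul : (⟨r * a, r * b⟩ : ℂ) = r * ⟨a, b⟩ := by apply Complex.ext <;> simp
  have hnorm : ‖(⟨a, b⟩ : ℂ)‖ = 1 := by
    rw [Complex.norm_def, Complex.normSq_mk, ← sq, ← sq, hab, Real.sqrt_one]
  have hne : (⟨a, b⟩ : ℂ) ≠ 0 := by
    rintro h
    simp [h] at hnorm
  rw [hmul, Complex.arg_real_mul _ hr, Complex.cos_arg hne, Complex.sin_arg, hnorm]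
  simp

lemma Matrix.mul_apply_combinations_eq_trace_mul_fin_two {Q B : Matrix (Fin 2) (Fin 2) ℝ}
    (hQ : Qᵀ * Q = 1) (hB : B 1 0 = B 0 1) :
    -Q.det * (Q * B) 0 0 - (Q * B) 1 1 = B.trace * (-Q.det * Q 0 0) ∧
      Q.det * (Q * B) 0 1 - (Q * B) 1 0 = B.trace * -Q 1 0 := by
  have hd := det_mul_self_eq_one_of_transpose_mul_self_eq_one hQ
  simp only [mul_apply, Fin.sum_univ_two, trace_fin_two, hB,
    apply_one_one_of_transpose_mul_self_eq_one_fin_two hQ,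
    apply_zero_one_of_transpose_mul_self_eq_one_fin_two hQ]
  constructor
  · linear_combination Q 1 0 * B 0 1 * hd
  · linear_combination (-Q 1 0 * B 1 1) * hd

theorem stmt5_general (G Q B : Matrix (Fin 2) (Fin 2) ℝ)
    (hQ : Qᵀ * Q = 1) (hB : B.PosDef) (hGQB : G = Q * B)
    (s : ℝ) (hs : s = if 0 < G.det then 1 else -1)
    (θ : ℝ) (hθ : θ = Complex.arg ⟨-s * G 0 0 - G 1 1, s * G 0 1 - G 1 0⟩)
    (C : Matrix (Fin 2) (Fin 2) ℝ)
    (hC : C = !![s * Real.cos θ, Real.sin θ; -s * Real.sin θ, Real.cos θ]) :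
    C = -Qᵀ ∧ C * G = -B := by
  subst hGQB
  have hsd : s = Q.det := hs.trans (hB.sign_det_mul hQ)
  subst hsd
  have hd := det_mul_self_eq_one_of_transpose_mul_self_eq_one hQ
  have hBsymm : B 1 0 = B 0 1 := by simpa using hB.isHermitian.apply 0 1
  obtain ⟨hre, him⟩ := mul_apply_combinations_eq_trace_mul_fin_two hQ hBsymm
  obtain ⟨hcos, hsin⟩ := Complex.cos_sin_arg_mk_pos_mul (a := -Q.det * Q 0 0) (b := -Q 1 0)
    hB.trace_pos (by linear_combination Q 0 0 ^ 2 * hd +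
      sq_add_sq_of_transpose_mul_self_eq_one_fin_two hQ)
  rw [← hre, ← him, ← hθ] at hcos hsin
  have hCQ : C = -Qᵀ := by
    rw [hC, hcos, hsin]
    ext i j
    fin_cases i <;> fin_cases j <;>
      simp [← mul_assoc, hd, apply_one_one_of_transpose_mul_self_eq_one_fin_two hQ,
        apply_zero_one_of_transpose_mul_self_eq_one_fin_two hQ]
  refine ⟨hCQ, ?_⟩
  rw [hCQ, neg_mul, ← Matrix.mul_assoc, hQ, Matrix.one_mul]

theorem stmt5 (G Q B : Matrix (Fin 2) (Fin 2) ℝ) (hdet : G.det ≠ 0)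
    (hQ : Qᵀ * Q = 1) (hB : B.PosDef) (hGQB : G = Q * B)
    (s : ℝ) (hs : s = if 0 < G.det then 1 else -1)
    (θ : ℝ) (hθ : θ = Complex.arg ⟨-s * G 0 0 - G 1 1, s * G 0 1 - G 1 0⟩)
    (C : Matrix (Fin 2) (Fin 2) ℝ)
    (hC : C = !![s * Real.cos θ, Real.sin θ; -s * Real.sin θ, Real.cos θ]) :
    C = -Qᵀ ∧ C * G = -B :=
  stmt5_general G Q B hQ hB hGQB s hs θ hθ C hC
end

section
/- Let B be an n×n real symmetric positive definite matrix and Q an n×n real orthogonal matrix all of whose eigenvalues have positive real parts. Then all eigenvalues of the product QB have positive real parts. -/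
/-!
Since `Q` is normal, the spectrum of its Hermitian part `Q + Qᴴ` is `{2 Re λ | λ ∈ σ(Q)}`,
so `Q + Qᴴ` is positive definite. If `Q B v = μ v` with `v ≠ 0`, put `u = B v`; then
`uᴴ Q u = μ · vᴴ B v`, and taking real parts gives
`Re μ · vᴴ B v = ½ uᴴ (Q + Qᴴ) u > 0`.
-/

open Matrix ComplexOrder

section

variable {l m n : Type*}

lemma Matrix.exists_mulVec_eq_smul_of_mem_spectrum [Fintype n] [DecidableEq n] {K : Type*} [Field K]
    {M : Matrix n n K} {μ : K} (h : μ ∈ spectrum K M) : ∃ v ≠ 0, M *ᵥ v = μ • v := by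
  rw [← Matrix.spectrum_toLin', ← Module.End.hasEigenvalue_iff_mem_spectrum] at h
  obtain ⟨v, hv⟩ := h.exists_hasEigenvector
  exact ⟨v, hv.2, by simpa using hv.apply_eq_smul⟩

lemma Matrix.star_dotProduct_conjTranspose_mulVec [Fintype n] {R : Type*} [CommSemiring R]
    [StarRing R] (S : Matrix n n R) (u : n → R) :
    star u ⬝ᵥ (Sᴴ *ᵥ u) = star (star u ⬝ᵥ (S *ᵥ u)) := by
  rw [star_dotProduct, star_mulVec, conjTranspose_conjTranspose, dotProduct_mulVec]

lemma Matrix.re_dotProduct_mulVec_pos_of_posDef_add_conjTranspose [Fintype n]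
    {S : Matrix n n ℂ} (hS : (S + Sᴴ).PosDef) {u : n → ℂ} (hu : u ≠ 0) :
    0 < (star u ⬝ᵥ (S *ᵥ u)).re := by
  have h := (Complex.pos_iff.mp (hS.dotProduct_mulVec_pos hu)).1
  rw [add_mulVec, dotProduct_add, star_dotProduct_conjTranspose_mulVec, Complex.add_re,
    Complex.star_def, Complex.conj_re] at h
  linarith

theorem Matrix.re_pos_of_mem_spectrum_mul [Fintype n] [DecidableEq n] {S A : Matrix n n ℂ}
    (hS : (S + Sᴴ).PosDef) (hA : A.PosDef) {μ : ℂ} (hμ : μ ∈ spectrum ℂ (S * A)) :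
    0 < μ.re := by
  obtain ⟨v, hv, hSAv⟩ := exists_mulVec_eq_smul_of_mem_spectrum hμ
  set r := star v ⬝ᵥ (A *ᵥ v)
  obtain ⟨hr_re, hr_im⟩ := Complex.pos_iff.mp (hA.dotProduct_mulVec_pos hv : 0 < r)
  have hAv : A *ᵥ v ≠ 0 :=
    (mulVec_injective_iff_isUnit.mpr hA.isUnit).ne hv |>.trans_eq (mulVec_zero A)
  have key : star (A *ᵥ v) ⬝ᵥ (S *ᵥ (A *ᵥ v)) = μ * r := by
    rw [mulVec_mulVec, hSAv, dotProduct_smul, smul_eq_mul, star_mulVec, ← dotProduct_mulVec,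
      hA.isHermitian.eq]
  have hpos := re_dotProduct_mulVec_pos_of_posDef_add_conjTranspose hS hAv
  rw [key, Complex.mul_re, ← hr_im, mul_zero, sub_zero] at hpos
  exact (pos_iff_pos_of_mul_pos hpos).mpr hr_re

open scoped Matrix.Norms.L2Operator MatrixOrder in
lemma Matrix.posDef_add_conjTranspose_of_isStarNormal [Fintype n] [DecidableEq n]
    {N : Matrix n n ℂ} [IsStarNormal N] (h : ∀ μ ∈ spectrum ℂ N, 0 < μ.re) :
    (N + Nᴴ).PosDef := by
  have hcfc : cfc (fun z : ℂ => z + star z) N = N + Nᴴ := by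
    rw [cfc_add .., cfc_id' .., cfc_star_id ..]
    rfl
  rw [← isStrictlyPositive_iff_posDef, ← hcfc, cfc_isStrictlyPositive_iff ..]
  intro z hz
  simpa [Complex.add_conj, Complex.lt_def] using h z hz

lemma Matrix.map_ofReal_mul [Fintype m] (A : Matrix l m ℝ) (B : Matrix m n ℝ) :
    (A * B).map Complex.ofReal = A.map Complex.ofReal * B.map Complex.ofReal :=
  Matrix.map_mul (f := Complex.ofRealHom)

lemma Matrix.conjTranspose_map_ofReal (A : Matrix m n ℝ) :
    (A.map Complex.ofReal)ᴴ = Aᵀ.map Complex.ofReal := by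
  rw [← conjTranspose_map _ fun x => (Complex.conj_ofReal x).symm,
    conjTranspose_eq_transpose_of_trivial]

lemma Matrix.map_ofReal_mem_unitary [Fintype n] [DecidableEq n] {Q : Matrix n n ℝ}
    (hQ : Qᵀ * Q = 1) : Q.map Complex.ofReal ∈ unitary (Matrix n n ℂ) := by
  refine mem_unitaryGroup_iff'.mpr ?_
  rw [star_eq_conjTranspose, conjTranspose_map_ofReal,
    ← map_ofReal_mul, hQ, Matrix.map_one _ Complex.ofReal_zero Complex.ofReal_one]

open scoped MatrixOrder in
lemma Matrix.PosDef.map_ofReal [Fintype n] [DecidableEq n] {B : Matrix n n ℝ} (hB : B.PosDef) :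
    (B.map Complex.ofReal).PosDef := by
  obtain ⟨C, hBC⟩ := CStarAlgebra.nonneg_iff_eq_star_mul_self.mp hB.posSemidef.nonneg
  have hpsd : (B.map Complex.ofReal).PosSemidef := by
    rw [hBC, star_eq_conjTranspose, conjTranspose_eq_transpose_of_trivial, map_ofReal_mul,
      ← conjTranspose_map_ofReal]
    exact posSemidef_conjTranspose_mul_self _
  have hdet : (B.map Complex.ofReal).det = B.det := (Complex.ofRealHom.map_det B).symm
  rw [hpsd.posDef_iff_isUnit, isUnit_iff_isUnit_det, hdet]
  exact (Complex.ofReal_ne_zero.mpr hB.det_pos.ne').isUnit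

end

theorem stmt6 (n : ℕ) (B Q : Matrix (Fin n) (Fin n) ℝ) (hB : B.PosDef)
    (hQ : Qᵀ * Q = 1)
    (hQspec : ∀ μ ∈ spectrum ℂ (Q.map Complex.ofReal), 0 < μ.re) :
    ∀ μ ∈ spectrum ℂ ((Q * B).map Complex.ofReal), 0 < μ.re := by
  have := isStarNormal_of_mem_unitary (map_ofReal_mem_unitary hQ)
  intro μ hμ
  rw [map_ofReal_mul] at hμ
  exact re_pos_of_mem_spectrum_mul (posDef_add_conjTranspose_of_isStarNormal hQspec)
    hB.map_ofReal hμ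
end
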